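/- Let g be a complex one-loop fixed point on ℂ^N that is not identically zero, and let b₁(g) denote the real number ∑_{i,j} g_{ijij} (which is real by the reality condition). Then σ_N⁻ ≤ b₁(g) ≤ σ_N⁺, where σ_N⁺ = N(N+1)/(2(N+4)) and σ_N⁻ = (N/4)(1 − √(1 − 24/(25N))), and moreover ‖g‖² ≤ (2/(3N)) · b₁(g) · (N/2 − b₁(g)); in particular ‖g‖² ≤ N/24. -/

import Mathlib

/-- `(g ♭ h)_{ijkl} = ∑_{m,n} g_{ijmn} h_{mnkl}`. -/
noncomputable def cflat {N : ℕ} (g h : Fin N → Fin N → Fin N → Fin N → ℂ) :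
    Fin N → Fin N → Fin N → Fin N → ℂ :=
  fun i j k l => ∑ m : Fin N, ∑ n : Fin N, g i j m n * h m n k l

/-- `(g ♯ h)_{ijkl} = ∑_{m,n} g_{imkn} h_{jnlm}`. -/
noncomputable def csharp {N : ℕ} (g h : Fin N → Fin N → Fin N → Fin N → ℂ) :
    Fin N → Fin N → Fin N → Fin N → ℂ :=
  fun i j k l => ∑ m : Fin N, ∑ n : Fin N, g i m k n * h j n l m

/-- `P(A)_{ijkl} = (A_{ijkl} + A_{jikl} + A_{ijlk} + A_{jilk})/4`. -/
noncomputable def cP {N : ℕ} (A : Fin N → Fin N → Fin N → Fin N → ℂ) :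
    Fin N → Fin N → Fin N → Fin N → ℂ :=
  fun i j k l => (A i j k l + A j i k l + A i j l k + A j i l k) / 4

/-- `‖g‖² = ∑_{i,j,k,l} |g_{ijkl}|²`. -/
noncomputable def csqnorm {N : ℕ} (g : Fin N → Fin N → Fin N → Fin N → ℂ) : ℝ :=
  ∑ i : Fin N, ∑ j : Fin N, ∑ k : Fin N, ∑ l : Fin N, ‖g i j k l‖ ^ 2

/-- A complex quartic coupling on `ℂ^N`: symmetric under `i ↔ j` and `k ↔ l`,
and satisfying the reality condition `conj g_{ijkl} = g_{klij}`. -/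
def IsCplxCoupling {N : ℕ} (g : Fin N → Fin N → Fin N → Fin N → ℂ) : Prop :=
  (∀ i j k l, g i j k l = g j i k l) ∧ (∀ i j k l, g i j k l = g i j l k) ∧
    (∀ i j k l, (starRingEnd ℂ) (g i j k l) = g k l i j)

/-- The complex one-loop fixed point equation `g = P(g ♭ g + 4 g ♯ g)`. -/
def IsCplxFixedPoint {N : ℕ} (g : Fin N → Fin N → Fin N → Fin N → ℂ) : Prop :=
  IsCplxCoupling g ∧
    ∀ i j k l, g i j k l =
      cP (fun a b c d => cflat g g a b c d + 4 * csharp g g a b c d) i j k l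

/-- `b₁(g) = ∑_{i,j} g_{ijij}`, which is real by the reality condition. -/
noncomputable def b1 {N : ℕ} (g : Fin N → Fin N → Fin N → Fin N → ℂ) : ℝ :=
  (∑ i : Fin N, ∑ j : Fin N, g i j i j).re

/-!
Contracting the fixed point equation with `ḡ` and applying Cauchy–Schwarz to `g ♭ g` and
`g ♯ g` gives `‖g‖² ≤ 5 ‖g‖³`, so `‖g‖² ≥ 1/25` once `g ≠ 0`. Taking the trace `∑ g_{ijij}` of
the fixed point equation gives `b₁ = 3 ‖g‖² + 2 ‖T‖²` for the Hermitian partial trace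
`T_{mn} = ∑_i g_{imin}`, whose own trace is `b₁`; Cauchy–Schwarz on that trace gives
`b₁² ≤ N ‖T‖²`, hence `‖g‖² ≤ (2/(3N)) b₁ (N/2 − b₁)`. Pairing `g` with the projection onto
pair-symmetric tensors gives `b₁² ≤ N(N+1)/2 · ‖g‖²`. The bounds on `b₁` are then quadratic
inequalities.
-/

section Reindex

variable {ι β : Type*} [Fintype ι] [AddCommMonoid β]

theorem sum4_congr {F G : ι → ι → ι → ι → β} (h : ∀ i j k l, F i j k l = G i j k l) :
    ∑ i, ∑ j, ∑ k, ∑ l, F i j k l = ∑ i, ∑ j, ∑ k, ∑ l, G i j k l := by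
  simp only [h]

theorem sum4_comm_pairs (F : ι → ι → ι → ι → β) :
    ∑ i, ∑ j, ∑ k, ∑ l, F k l i j = ∑ i, ∑ j, ∑ k, ∑ l, F i j k l :=
  (Finset.sum_congr rfl fun _ _ => Finset.sum_comm).trans <| Finset.sum_comm.trans <|
    Finset.sum_congr rfl fun _ _ =>
      (Finset.sum_congr rfl fun _ _ => Finset.sum_comm).trans Finset.sum_comm

theorem sum4_comm_middle (F : ι → ι → ι → ι → β) :
    ∑ i, ∑ j, ∑ k, ∑ l, F i k j l = ∑ i, ∑ j, ∑ k, ∑ l, F i j k l :=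
  Finset.sum_congr rfl fun _ _ => Finset.sum_comm

theorem sum4_rotate_last_three (F : ι → ι → ι → ι → β) :
    ∑ i, ∑ j, ∑ k, ∑ l, F i l j k = ∑ i, ∑ j, ∑ k, ∑ l, F i j k l :=
  Finset.sum_congr rfl fun _ _ =>
    (Finset.sum_congr rfl fun _ _ => Finset.sum_comm).trans Finset.sum_comm

end Reindex

section CauchySchwarz

variable {ι : Type*} [Fintype ι]

theorem Complex.re_sq_le_norm_sq (z : ℂ) : z.re ^ 2 ≤ ‖z‖ ^ 2 :=
  sq_le_sq.2 ((Complex.abs_re_le_norm z).trans (le_abs_self _))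

theorem norm_sum_mul_sq_le (a b : ι → ℂ) :
    ‖∑ i, a i * b i‖ ^ 2 ≤ (∑ i, ‖a i‖ ^ 2) * ∑ i, ‖b i‖ ^ 2 := by
  calc ‖∑ i, a i * b i‖ ^ 2 ≤ (∑ i, ‖a i‖ * ‖b i‖) ^ 2 := by
        gcongr
        exact (norm_sum_le _ _).trans_eq (by simp)
    _ ≤ _ := Finset.sum_mul_sq_le_sq_mul_sq _ _ _

theorem norm_sum2_mul_sq_le (a b : ι → ι → ℂ) :
    ‖∑ m, ∑ n, a m n * b m n‖ ^ 2 ≤ (∑ m, ∑ n, ‖a m n‖ ^ 2) * ∑ m, ∑ n, ‖b m n‖ ^ 2 := by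
  simpa only [Fintype.sum_prod_type] using
    norm_sum_mul_sq_le (fun p : ι × ι => a p.1 p.2) (fun p => b p.1 p.2)

end CauchySchwarz

section Tensor

variable {N : ℕ}

noncomputable def cpair (x y : Fin N → Fin N → Fin N → Fin N → ℂ) : ℂ :=
  ∑ i : Fin N, ∑ j : Fin N, ∑ k : Fin N, ∑ l : Fin N, x i j k l * y i j k l

theorem norm_cpair_sq_le (x y : Fin N → Fin N → Fin N → Fin N → ℂ) :
    ‖cpair x y‖ ^ 2 ≤ csqnorm x * csqnorm y := by
  unfold cpair csqnorm
  simpa only [Fintype.sum_prod_type] using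
    norm_sum_mul_sq_le (fun p : Fin N × Fin N × Fin N × Fin N => x p.1 p.2.1 p.2.2.1 p.2.2.2)
      (fun p => y p.1 p.2.1 p.2.2.1 p.2.2.2)

theorem norm_cpair_le_of_csqnorm_le {x : Fin N → Fin N → Fin N → Fin N → ℂ} {c : ℝ}
    (hc : 0 ≤ c) (hx : csqnorm x ≤ c ^ 2) (y : Fin N → Fin N → Fin N → Fin N → ℂ) :
    ‖cpair x y‖ ≤ c * √(csqnorm y) := by
  refine le_of_pow_le_pow_left₀ two_ne_zero (by positivity) ?_
  calc ‖cpair x y‖ ^ 2 ≤ csqnorm x * csqnorm y := norm_cpair_sq_le x y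
    _ ≤ c ^ 2 * csqnorm y := by gcongr; unfold csqnorm; positivity
    _ = (c * √(csqnorm y)) ^ 2 := by
        rw [mul_pow, Real.sq_sqrt (by unfold csqnorm; positivity)]

theorem cpair_star_right_self (x : Fin N → Fin N → Fin N → Fin N → ℂ) :
    cpair x (star x) = csqnorm x := by
  simp [cpair, csqnorm, Complex.mul_conj']

theorem csqnorm_star (x : Fin N → Fin N → Fin N → Fin N → ℂ) :
    csqnorm (star x) = csqnorm x := by
  simp [csqnorm]

theorem csqnorm_pos {x : Fin N → Fin N → Fin N → Fin N → ℂ} (hx : x ≠ 0) : 0 < csqnorm x := by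
  obtain ⟨i, j, k, l, hijkl⟩ : ∃ i j k l, x i j k l ≠ 0 := by simpa [funext_iff] using hx
  have hsum : csqnorm x
      = ∑ p : Fin N × Fin N × Fin N × Fin N, ‖x p.1 p.2.1 p.2.2.1 p.2.2.2‖ ^ 2 := by
    simp only [csqnorm, Fintype.sum_prod_type]
  rw [hsum]
  exact Finset.sum_pos' (fun _ _ => by positivity) ⟨(i, j, k, l), Finset.mem_univ _, by positivity⟩

def IsPairSymmetric (x : Fin N → Fin N → Fin N → Fin N → ℂ) : Prop :=
  (∀ i j k l, x i j k l = x j i k l) ∧ ∀ i j k l, x i j k l = x i j l k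

theorem IsPairSymmetric.star {x : Fin N → Fin N → Fin N → Fin N → ℂ} (hx : IsPairSymmetric x) :
    IsPairSymmetric (star x) :=
  ⟨fun i j k l => by simp [hx.1 i j k l], fun i j k l => by simp [hx.2 i j k l]⟩

theorem isPairSymmetric_cP (A : Fin N → Fin N → Fin N → Fin N → ℂ) : IsPairSymmetric (cP A) :=
  ⟨fun i j k l => by simp only [cP]; ring, fun i j k l => by simp only [cP]; ring⟩

theorem IsCplxCoupling.isPairSymmetric {g : Fin N → Fin N → Fin N → Fin N → ℂ}
    (hg : IsCplxCoupling g) : IsPairSymmetric g :=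
  ⟨hg.1, hg.2.1⟩

theorem cpair_cP_left {y : Fin N → Fin N → Fin N → Fin N → ℂ} (hy : IsPairSymmetric y)
    (A : Fin N → Fin N → Fin N → Fin N → ℂ) : cpair (cP A) y = cpair A y := by
  have swap12 (B : Fin N → Fin N → Fin N → Fin N → ℂ) :
      cpair (fun i j k l => B j i k l) y = cpair B y :=
    (sum4_congr fun i j k l => by rw [hy.1 i j k l]).trans Finset.sum_comm
  have swap34 (B : Fin N → Fin N → Fin N → Fin N → ℂ) :
      cpair (fun i j k l => B i j l k) y = cpair B y :=
    (sum4_congr fun i j k l => by rw [hy.2 i j k l]).trans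
      (Finset.sum_congr rfl fun _ _ => Finset.sum_congr rfl fun _ _ => Finset.sum_comm)
  have hsplit : cpair (cP A) y = (cpair A y + cpair (fun i j k l => A j i k l) y
      + cpair (fun i j k l => A i j l k) y + cpair (fun i j k l => A j i l k) y) / 4 := by
    simp only [cpair, cP, add_div, add_mul, Finset.sum_add_distrib, div_mul_eq_mul_div,
      Finset.sum_div]
  rw [hsplit, swap12, swap34, swap12 (fun i j k l => A i j l k), swap34]
  ring

theorem csqnorm_cflat_le (g h : Fin N → Fin N → Fin N → Fin N → ℂ) :
    csqnorm (cflat g h) ≤ csqnorm g * csqnorm h := by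
  calc csqnorm (cflat g h)
      ≤ ∑ i : Fin N, ∑ j : Fin N, ∑ k : Fin N, ∑ l : Fin N,
          (∑ m : Fin N, ∑ n : Fin N, ‖g i j m n‖ ^ 2) *
            ∑ m : Fin N, ∑ n : Fin N, ‖h m n k l‖ ^ 2 := by
        unfold csqnorm cflat
        gcongr with i _ j _ k _ l _
        exact norm_sum2_mul_sq_le _ _
    _ = csqnorm g * csqnorm h := by
        simp only [← Finset.mul_sum, ← Finset.sum_mul]
        rw [csqnorm, csqnorm, ← sum4_comm_pairs fun m n k l => ‖h m n k l‖ ^ 2]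

theorem csqnorm_csharp_le (g h : Fin N → Fin N → Fin N → Fin N → ℂ) :
    csqnorm (csharp g h) ≤ csqnorm g * csqnorm h := by
  calc csqnorm (csharp g h)
      ≤ ∑ i : Fin N, ∑ j : Fin N, ∑ k : Fin N, ∑ l : Fin N,
          (∑ m : Fin N, ∑ n : Fin N, ‖g i m k n‖ ^ 2) *
            ∑ m : Fin N, ∑ n : Fin N, ‖h j n l m‖ ^ 2 := by
        unfold csqnorm csharp
        gcongr with i _ j _ k _ l _
        exact norm_sum2_mul_sq_le _ _
    _ = ∑ i : Fin N, ∑ k : Fin N, ∑ j : Fin N, ∑ l : Fin N,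
          (∑ m : Fin N, ∑ n : Fin N, ‖g i m k n‖ ^ 2) *
            ∑ m : Fin N, ∑ n : Fin N, ‖h j n l m‖ ^ 2 :=
        sum4_comm_middle fun i k j l =>
          (∑ m : Fin N, ∑ n : Fin N, ‖g i m k n‖ ^ 2) * ∑ m : Fin N, ∑ n : Fin N, ‖h j n l m‖ ^ 2
    _ = csqnorm g * csqnorm h := by
        simp only [← Finset.mul_sum, ← Finset.sum_mul]
        rw [csqnorm, csqnorm, ← sum4_comm_middle fun i m k n => ‖g i m k n‖ ^ 2,
          ← sum4_rotate_last_three fun j n l m => ‖h j n l m‖ ^ 2]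

def idTensor (N : ℕ) : Fin N → Fin N → Fin N → Fin N → ℂ :=
  fun i j k l => if i = k ∧ j = l then 1 else 0

theorem cpair_idTensor (y : Fin N → Fin N → Fin N → Fin N → ℂ) :
    cpair (idTensor N) y = ∑ i : Fin N, ∑ j : Fin N, y i j i j := by
  simp [cpair, idTensor, ite_and]

/-- `cP (idTensor N)` is the orthogonal projection onto pair-symmetric tensors, so its squared
norm is the dimension of `Sym² ℂ^N`. -/
theorem csqnorm_cP_idTensor : csqnorm (cP (idTensor N)) = N * (N + 1) / 2 := by
  apply Complex.ofReal_injective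
  rw [← cpair_star_right_self, cpair_cP_left (isPairSymmetric_cP _).star, cpair_idTensor]
  have hdiag (i j : Fin N) : (j = i ∧ i = j) ↔ i = j := ⟨And.right, fun h => ⟨h.symm, h⟩⟩
  simp [cP, idTensor, hdiag, Finset.sum_add_distrib, ← Finset.sum_div]
  ring

theorem sq_b1_le_mul_csqnorm {g : Fin N → Fin N → Fin N → Fin N → ℂ} (hg : IsPairSymmetric g) :
    b1 g ^ 2 ≤ N * (N + 1) / 2 * csqnorm g := by
  have hb : b1 g = (cpair (cP (idTensor N)) g).re := by
    rw [cpair_cP_left hg, cpair_idTensor, b1]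
  calc b1 g ^ 2 ≤ ‖cpair (cP (idTensor N)) g‖ ^ 2 := hb ▸ Complex.re_sq_le_norm_sq _
    _ ≤ N * (N + 1) / 2 * csqnorm g := csqnorm_cP_idTensor (N := N) ▸ norm_cpair_sq_le _ _

end Tensor

section FixedPoint

variable {N : ℕ} {g : Fin N → Fin N → Fin N → Fin N → ℂ}

def partialTrace (g : Fin N → Fin N → Fin N → Fin N → ℂ) : Fin N → Fin N → ℂ :=
  fun m n => ∑ i : Fin N, g i m i n

theorem sq_b1_le_card_mul_sum_partialTrace (g : Fin N → Fin N → Fin N → Fin N → ℂ) :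
    b1 g ^ 2 ≤ N * ∑ m : Fin N, ∑ n : Fin N, ‖partialTrace g m n‖ ^ 2 := by
  have htrace : b1 g = (∑ m : Fin N, partialTrace g m m).re := by
    simp only [b1, partialTrace]
    rw [Finset.sum_comm]
  calc b1 g ^ 2 ≤ ‖∑ m : Fin N, partialTrace g m m‖ ^ 2 := htrace ▸ Complex.re_sq_le_norm_sq _
    _ ≤ (∑ m : Fin N, ‖partialTrace g m m‖) ^ 2 := by gcongr; exact norm_sum_le _ _
    _ ≤ N * ∑ m : Fin N, ‖partialTrace g m m‖ ^ 2 := by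
        simpa using sq_sum_le_card_mul_sum_sq (s := Finset.univ)
          (f := fun m => ‖partialTrace g m m‖)
    _ ≤ N * ∑ m : Fin N, ∑ n : Fin N, ‖partialTrace g m n‖ ^ 2 := by
        gcongr with m
        exact Finset.single_le_sum (f := fun n => ‖partialTrace g m n‖ ^ 2)
          (fun _ _ => by positivity) (Finset.mem_univ m)

theorem sum_cP_diag (A : Fin N → Fin N → Fin N → Fin N → ℂ) :
    ∑ i : Fin N, ∑ j : Fin N, cP A i j i j
      = (∑ i : Fin N, ∑ j : Fin N, A i j i j + ∑ i : Fin N, ∑ j : Fin N, A i j j i) / 2 := by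
  simp only [cP, ← Finset.sum_div, Finset.sum_add_distrib]
  rw [Finset.sum_comm (f := fun i j => A j i i j), Finset.sum_comm (f := fun i j => A j i j i)]
  ring

theorem IsCplxCoupling.sum_cflat_diag (hg : IsCplxCoupling g) :
    ∑ i : Fin N, ∑ j : Fin N, cflat g g i j i j = csqnorm g := by
  rw [← cpair_star_right_self]
  simp only [cflat, cpair, Pi.star_apply, Complex.star_def, hg.2.2]

theorem IsCplxCoupling.sum_cflat_antidiag (hg : IsCplxCoupling g) :
    ∑ i : Fin N, ∑ j : Fin N, cflat g g i j j i = csqnorm g := by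
  rw [← hg.sum_cflat_diag]
  exact sum4_congr fun i j m n => by rw [hg.2.1 m n j i]

theorem IsCplxCoupling.sum_csharp_diag (hg : IsCplxCoupling g) :
    ∑ i : Fin N, ∑ j : Fin N, csharp g g i j i j
      = ∑ m : Fin N, ∑ n : Fin N, (‖partialTrace g m n‖ ^ 2 : ℝ) := by
  push_cast
  simp only [← Complex.mul_conj', partialTrace, map_sum, hg.2.2, Finset.sum_mul_sum, csharp]
  exact sum4_comm_pairs fun m n i j => g i m i n * g j n j m

theorem IsCplxCoupling.sum_csharp_antidiag (hg : IsCplxCoupling g) :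
    ∑ i : Fin N, ∑ j : Fin N, csharp g g i j j i = csqnorm g := by
  rw [← cpair_star_right_self]
  simp only [csharp, cpair, Pi.star_apply, Complex.star_def, hg.2.2]
  exact sum4_comm_middle fun i j k l => g i j k l * g k l i j

theorem IsCplxFixedPoint.b1_eq (hfp : IsCplxFixedPoint g) :
    b1 g = 3 * csqnorm g + 2 * ∑ m : Fin N, ∑ n : Fin N, ‖partialTrace g m n‖ ^ 2 := by
  have htrace : ∑ i : Fin N, ∑ j : Fin N, g i j i j
      = ((3 * csqnorm g + 2 * ∑ m : Fin N, ∑ n : Fin N, ‖partialTrace g m n‖ ^ 2 : ℝ) : ℂ) := by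
    rw [Finset.sum_congr rfl fun i _ => Finset.sum_congr rfl fun j _ => hfp.2 i j i j,
      sum_cP_diag]
    simp only [Finset.sum_add_distrib, ← Finset.mul_sum]
    rw [hfp.1.sum_cflat_diag, hfp.1.sum_cflat_antidiag, hfp.1.sum_csharp_diag,
      hfp.1.sum_csharp_antidiag]
    push_cast
    ring
  rw [b1, htrace, Complex.ofReal_re]

theorem IsCplxFixedPoint.csqnorm_eq_cpair (hfp : IsCplxFixedPoint g) :
    (csqnorm g : ℂ) = cpair (cflat g g) (star g) + 4 * cpair (csharp g g) (star g) := by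
  have hg : g = cP fun a b c d => cflat g g a b c d + 4 * csharp g g a b c d := by
    ext i j k l
    exact hfp.2 i j k l
  rw [← cpair_star_right_self, congrArg (cpair · (star g)) hg,
    cpair_cP_left hfp.1.isPairSymmetric.star]
  simp only [cpair, add_mul, mul_assoc, Finset.sum_add_distrib, Finset.mul_sum]

theorem IsCplxFixedPoint.one_div_25_le_csqnorm (hfp : IsCplxFixedPoint g) (hne : g ≠ 0) :
    1 / 25 ≤ csqnorm g := by
  have hs : 0 < csqnorm g := csqnorm_pos hne
  have hcontract (X : Fin N → Fin N → Fin N → Fin N → ℂ) (hX : csqnorm X ≤ csqnorm g ^ 2) :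
      ‖cpair X (star g)‖ ≤ csqnorm g * √(csqnorm g) :=
    csqnorm_star g ▸ norm_cpair_le_of_csqnorm_le hs.le hX (star g)
  have hcubic : csqnorm g ≤ 5 * (csqnorm g * √(csqnorm g)) :=
    calc csqnorm g = ‖(csqnorm g : ℂ)‖ := by rw [Complex.norm_real, Real.norm_of_nonneg hs.le]
      _ ≤ ‖cpair (cflat g g) (star g)‖ + 4 * ‖cpair (csharp g g) (star g)‖ := by
        rw [hfp.csqnorm_eq_cpair]
        exact (norm_add_le _ _).trans_eq (by rw [norm_mul, Complex.norm_ofNat])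
      _ ≤ csqnorm g * √(csqnorm g) + 4 * (csqnorm g * √(csqnorm g)) := by
        gcongr
        exacts [hcontract _ ((csqnorm_cflat_le g g).trans_eq (sq _).symm),
          hcontract _ ((csqnorm_csharp_le g g).trans_eq (sq _).symm)]
      _ = 5 * (csqnorm g * √(csqnorm g)) := by ring
  have hsqrt : 1 ≤ 5 * √(csqnorm g) := by nlinarith
  nlinarith [Real.sq_sqrt hs.le, Real.sqrt_nonneg (csqnorm g)]

theorem IsCplxFixedPoint.csqnorm_le (hfp : IsCplxFixedPoint g) (hN : (0 : ℝ) < N) :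
    csqnorm g ≤ 2 / (3 * N) * b1 g * (N / 2 - b1 g) := by
  have htrace := sq_b1_le_card_mul_sum_partialTrace g
  rw [hfp.b1_eq] at htrace ⊢
  rw [show ∀ b : ℝ, 2 / (3 * N) * b * (N / 2 - b) = (N * b - 2 * b ^ 2) / (3 * N) from
    fun b => by field_simp, le_div_iff₀ (by positivity)]
  nlinarith

end FixedPoint

noncomputable def sigmaPlus (N : ℝ) : ℝ := N * (N + 1) / (2 * (N + 4))

noncomputable def sigmaMinus (N : ℝ) : ℝ := N / 4 * (1 - √(1 - 24 / (25 * N)))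

section Quadratic

variable {N b s : ℝ}

theorem mul_mul_sub_le_div_24 (hN : 0 < N) : 2 / (3 * N) * b * (N / 2 - b) ≤ N / 24 :=
  calc 2 / (3 * N) * b * (N / 2 - b) = 2 / (3 * N) * (b * (N / 2 - b)) := by ring
    _ ≤ 2 / (3 * N) * (N ^ 2 / 16) := by gcongr; nlinarith [sq_nonneg (b - N / 4)]
    _ = N / 24 := by field_simp; ring

theorem sigmaMinus_le (hN : 0 < N) (h : 1 / 25 ≤ 2 / (3 * N) * b * (N / 2 - b)) :
    sigmaMinus N ≤ b := by
  have hq : (N - 4 * b) ^ 2 ≤ N ^ 2 * (1 - 24 / (25 * N)) := by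
    rw [show N ^ 2 * (1 - 24 / (25 * N)) = N ^ 2 - 24 * N / 25 by field_simp]
    rw [show 2 / (3 * N) * b * (N / 2 - b) = (N * b - 2 * b ^ 2) / (3 * N) by field_simp,
      le_div_iff₀ (by positivity)] at h
    nlinarith
  have hroot : N - 4 * b ≤ N * √(1 - 24 / (25 * N)) :=
    calc N - 4 * b ≤ √((N - 4 * b) ^ 2) := Real.sqrt_sq_eq_abs (N - 4 * b) ▸ le_abs_self _
      _ ≤ √(N ^ 2 * (1 - 24 / (25 * N))) := Real.sqrt_le_sqrt hq
      _ = N * √(1 - 24 / (25 * N)) := by rw [Real.sqrt_mul (sq_nonneg N), Real.sqrt_sq hN.le]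
  rw [sigmaMinus]
  linarith

theorem le_sigmaPlus (hN : 0 < N) (hb : 0 < b) (hcs : b ^ 2 ≤ N * (N + 1) / 2 * s)
    (hs : s ≤ 2 / (3 * N) * b * (N / 2 - b)) : b ≤ sigmaPlus N := by
  have hsq : b * b ≤ b * ((N + 1) / 3 * (N / 2 - b)) :=
    calc b * b = b ^ 2 := by ring
      _ ≤ N * (N + 1) / 2 * (2 / (3 * N) * b * (N / 2 - b)) := hcs.trans (by gcongr)
      _ = b * ((N + 1) / 3 * (N / 2 - b)) := by field_simp
  have hlin := le_of_mul_le_mul_left hsq hb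
  rw [sigmaPlus, le_div_iff₀ (by positivity)]
  linarith

end Quadratic

theorem cplxFixedPoint_b1_bounds_general {N : ℕ}
    (g : Fin N → Fin N → Fin N → Fin N → ℂ) (hfp : IsCplxFixedPoint g)
    (hne : g ≠ 0) :
    ((N : ℝ) / 4 * (1 - Real.sqrt (1 - 24 / (25 * (N : ℝ)))) ≤ b1 g ∧
        b1 g ≤ (N : ℝ) * ((N : ℝ) + 1) / (2 * ((N : ℝ) + 4))) ∧
      csqnorm g ≤ 2 / (3 * (N : ℝ)) * b1 g * ((N : ℝ) / 2 - b1 g) ∧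
      csqnorm g ≤ (N : ℝ) / 24 := by
  have hs : 1 / 25 ≤ csqnorm g := hfp.one_div_25_le_csqnorm hne
  have hN : (0 : ℝ) < N := by
    exact_mod_cast Nat.pos_of_ne_zero (by rintro rfl; norm_num [csqnorm] at hs)
  have hnorm := hfp.csqnorm_le hN
  have hb : 0 < b1 g := by
    rw [hfp.b1_eq]
    exact add_pos_of_pos_of_nonneg (by linarith) (by positivity)
  exact ⟨⟨sigmaMinus_le hN (hs.trans hnorm),
      le_sigmaPlus hN hb (sq_b1_le_mul_csqnorm hfp.1.isPairSymmetric) hnorm⟩,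
    hnorm, hnorm.trans (mul_mul_sub_le_div_24 hN)⟩

/-- for a nonzero complex one-loop fixed point,
`σ_N⁻ ≤ b₁(g) ≤ σ_N⁺` with `σ_N⁺ = N(N+1)/(2(N+4))` and
`σ_N⁻ = (N/4)(1 − √(1 − 24/(25N)))`, and
`‖g‖² ≤ (2/(3N)) b₁(g) (N/2 − b₁(g))`; in particular `‖g‖² ≤ N/24`. -/
theorem cplxFixedPoint_b1_bounds {N : ℕ} (hN : 1 ≤ N)
    (g : Fin N → Fin N → Fin N → Fin N → ℂ) (hfp : IsCplxFixedPoint g)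
    (hne : g ≠ 0) :
    ((N : ℝ) / 4 * (1 - Real.sqrt (1 - 24 / (25 * (N : ℝ)))) ≤ b1 g ∧
        b1 g ≤ (N : ℝ) * ((N : ℝ) + 1) / (2 * ((N : ℝ) + 4))) ∧
      csqnorm g ≤ 2 / (3 * (N : ℝ)) * b1 g * ((N : ℝ) / 2 - b1 g) ∧
      csqnorm g ≤ (N : ℝ) / 24 :=
  cplxFixedPoint_b1_bounds_general g hfp hne
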